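/- Fix 1 ≤ k < n and let ŵ ∈ S_n be defined by ŵ(t) = k+1−t for 1 ≤ t ≤ k and ŵ(t) = n+k+1−t for k+1 ≤ t ≤ n. Let T be a set of pairwise disjoint pairs with first coordinate ≤ k and second coordinate > k, and let i₁ < i₂ ≤ k and j₁ ≠ j₂ with j₁, j₂ > k be four indices none of which is an endpoint of a pair of T. Put S = {(i₁,j₁),(i₂,j₂)} ∪ T and S' = {(i₂,j₁),(i₁,j₂)} ∪ T, and let σ_S, σ_{S'} be the products of the corresponding transpositions. Then ŵ·σ_{S'}·ŵ < ŵ·σ_S·ŵ in the Bruhat order on S_n if and only if j₂ < j₁. -/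

import Mathlib

/-!
Conjugating by the involution `ŵ` turns `σ_{S'}` and `σ_S` into permutations `u` and `v` that
agree off the four points `a = ŵ i₁`, `b = ŵ i₂`, `c = ŵ j₁`, `d = ŵ j₂`, with `b < a < c, d`;
there `u = (a d)(b c)` and `v = (a c)(b d)`. Hence the rank counts `#{x ≤ p : q ≤ u x}` of `u` and
`v` differ only through these four points. If `c < d`, on each of the pairs of positions
`b < a` and `c < d` the permutation `v` puts the larger value first, which can only increase
every rank count. If `d < c`, the count at `(p, q) = (b, c)` is `1` for `u` but `0` for `v`.
Finally `ŵ` reverses the block `[k, n)`, so `c < d` iff `j₂ < j₁`.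
-/

/-- The Bruhat order on `Sₙ`, via the standard dot-criterion characterization:
`u ≤ v` iff for all `p, q`, `#{a ≤ p : u a ≥ q} ≤ #{a ≤ p : v a ≥ q}`. -/
def bruhatLE {n : ℕ} (u v : Equiv.Perm (Fin n)) : Prop :=
  ∀ p q : Fin n,
    (Finset.univ.filter fun a : Fin n => a ≤ p ∧ q ≤ u a).card ≤
      (Finset.univ.filter fun a : Fin n => a ≤ p ∧ q ≤ v a).card

/-- The strict Bruhat order on `Sₙ`. -/
def bruhatLT {n : ℕ} (u v : Equiv.Perm (Fin n)) : Prop :=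
  bruhatLE u v ∧ u ≠ v

open Equiv

lemma ite_add_ite_le_of_lt_of_lt {α β : Type*} [LinearOrder α] [LinearOrder β] {x y : α}
    {s t : β} (hxy : x < y) (hst : s < t) (P : α) (Q : β) :
    (if x ≤ P ∧ Q ≤ s then 1 else 0) + (if y ≤ P ∧ Q ≤ t then 1 else 0) ≤
      (if x ≤ P ∧ Q ≤ t then 1 else 0) + (if y ≤ P ∧ Q ≤ s then 1 else 0) := by
  split_ifs <;> grind

lemma bruhatLE_iff_of_eqOn_compl {n : ℕ} {u v : Perm (Fin n)} (s : Finset (Fin n))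
    (h : ∀ x ∉ s, u x = v x) :
    bruhatLE u v ↔ ∀ P Q : Fin n,
      ∑ x ∈ s, (if x ≤ P ∧ Q ≤ u x then 1 else 0) ≤
        ∑ x ∈ s, (if x ≤ P ∧ Q ≤ v x then 1 else 0) := by
  have hcompl : ∀ P Q : Fin n, ∑ x ∈ sᶜ, (if x ≤ P ∧ Q ≤ u x then 1 else 0) =
      ∑ x ∈ sᶜ, (if x ≤ P ∧ Q ≤ v x then 1 else 0) := fun P Q =>
    Finset.sum_congr rfl fun x hx => by rw [h x (Finset.mem_compl.mp hx)]
  refine forall₂_congr fun P Q => ?_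
  simp only [Finset.card_filter, ← Finset.sum_add_sum_compl s, hcompl, Nat.add_le_add_iff_right]

lemma bruhatLT_iff_of_four_points {n : ℕ} {u v : Perm (Fin n)} {a b c d : Fin n}
    (hba : b < a) (hac : a < c) (had : a < d) (hcd : c ≠ d)
    (hua : u a = d) (hub : u b = c) (huc : u c = b) (hud : u d = a)
    (hva : v a = c) (hvb : v b = d) (hvc : v c = a) (hvd : v d = b)
    (hrest : ∀ x ∉ ({a, b, c, d} : Finset (Fin n)), u x = v x) :
    bruhatLT u v ↔ c < d := by
  have hsum : ∀ f : Fin n → ℕ, ∑ x ∈ ({a, b, c, d} : Finset (Fin n)), f x =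
      (f b + f a) + (f c + f d) := fun f => by
    rw [Finset.sum_insert (by simp [hba.ne', hac.ne, had.ne]),
      Finset.sum_insert (by simp [(hba.trans hac).ne, (hba.trans had).ne]),
      Finset.sum_pair hcd]
    ring
  simp only [bruhatLT, bruhatLE_iff_of_eqOn_compl _ hrest, hsum, hua, hub, huc, hud, hva, hvb,
    hvc, hvd]
  constructor
  · rintro ⟨hle, -⟩
    by_contra! hdc
    have hbc := hle b c
    simp [not_le.mpr hba, not_le.mpr (hba.trans hac), not_le.mpr (hba.trans had),
      not_le.mpr (lt_of_le_of_ne hdc hcd.symm)] at hbc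
  · intro hlt
    refine ⟨fun P Q => add_le_add (ite_add_ite_le_of_lt_of_lt hba hlt P Q)
      (ite_add_ite_le_of_lt_of_lt hlt hba P Q), fun h => hcd ?_⟩
    rw [← hva, ← hua, h]

lemma apply_ne_of_apply_eq_self {α : Type*} {σ : Perm α} {a x : α} (ha : σ a = a) (hx : x ≠ a) :
    σ x ≠ a :=
  (σ.injective.ne_iff' ha).mpr hx

lemma list_prod_apply_eq_self {α : Type*} {l : List (Perm α)} {x : α} (h : ∀ g ∈ l, g x = x) :
    l.prod x = x :=
  MulAction.mem_stabilizer_iff.mp (Subgroup.list_prod_mem (MulAction.stabilizer (Perm α) x) h)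

lemma bruhatLT_conj_two_arcs_iff {n : ℕ} {w σ : Perm (Fin n)} (hw : Function.Involutive w)
    {i₁ i₂ j₁ j₂ : Fin n} (hσi₁ : σ i₁ = i₁) (hσi₂ : σ i₂ = i₂) (hσj₁ : σ j₁ = j₁)
    (hσj₂ : σ j₂ = j₂) (hi : w i₂ < w i₁) (hij₁ : w i₁ < w j₁) (hij₂ : w i₁ < w j₂)
    (hj : j₁ ≠ j₂) :
    bruhatLT (w * (swap i₂ j₁ * swap i₁ j₂ * σ) * w) (w * (swap i₁ j₁ * swap i₂ j₂ * σ) * w) ↔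
      w j₁ < w j₂ := by
  have hi₁₂ : i₁ ≠ i₂ := fun h => hi.ne (by rw [h])
  have hi₁j₁ : i₁ ≠ j₁ := fun h => hij₁.ne (by rw [h])
  have hi₁j₂ : i₁ ≠ j₂ := fun h => hij₂.ne (by rw [h])
  have hi₂j₁ : i₂ ≠ j₁ := fun h => (hi.trans hij₁).ne (by rw [h])
  have hi₂j₂ : i₂ ≠ j₂ := fun h => (hi.trans hij₂).ne (by rw [h])
  have hconj : ∀ τ : Perm (Fin n), ∀ x, (w * τ * w) (w x) = w (τ x) := fun τ x => by
    simp [hw x]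
  have hrest : ∀ x ∉ ({w i₁, w i₂, w j₁, w j₂} : Finset (Fin n)),
      (w * (swap i₂ j₁ * swap i₁ j₂ * σ) * w) x = (w * (swap i₁ j₁ * swap i₂ j₂ * σ) * w) x := by
    intro x hx
    obtain ⟨y, rfl⟩ : ∃ y, x = w y := ⟨w x, (hw x).symm⟩
    simp only [Finset.mem_insert, Finset.mem_singleton, not_or, w.injective.eq_iff] at hx
    obtain ⟨hy₁, hy₂, hy₃, hy₄⟩ := hx
    simp [swap_apply_of_ne_of_ne, apply_ne_of_apply_eq_self, *]
  refine bruhatLT_iff_of_four_points hi hij₁ hij₂ (w.injective.ne hj) ?_ ?_ ?_ ?_ ?_ ?_ ?_ ?_ hrest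
  all_goals simp [swap_apply_of_ne_of_ne, hi₁₂.symm, hi₁j₁.symm, hi₁j₂.symm, hi₂j₁.symm,
    hi₂j₂.symm, hj.symm, *]

lemma involutive_of_val_eq_reverse_blocks {n k : ℕ} {w : Perm (Fin n)}
    (hw : ∀ t : Fin n, (w t : ℕ) = if (t : ℕ) < k then k - 1 - (t : ℕ) else n + k - 1 - (t : ℕ)) :
    Function.Involutive w := fun x => by
  have := x.isLt
  have := (w x).isLt
  apply Fin.ext
  rw [hw, hw x]
  split_ifs <;> omega

theorem bruhat_swap_two_arcs_general (n k : ℕ) (m : ℕ)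
    (p : Fin m → Fin n × Fin n)
    (i₁ i₂ j₁ j₂ : Fin n) (hi₁₂ : i₁ < i₂) (hi₂ : (i₂ : ℕ) < k)
    (hj₁ : k ≤ (j₁ : ℕ)) (hj₂ : k ≤ (j₂ : ℕ)) (hjj : j₁ ≠ j₂)
    (hnew : ∀ s : Fin m,
      i₁ ≠ (p s).1 ∧ i₁ ≠ (p s).2 ∧ i₂ ≠ (p s).1 ∧ i₂ ≠ (p s).2 ∧
        j₁ ≠ (p s).1 ∧ j₁ ≠ (p s).2 ∧ j₂ ≠ (p s).1 ∧ j₂ ≠ (p s).2)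
    (w : Equiv.Perm (Fin n))
    (hw : ∀ t : Fin n,
      (w t : ℕ) = if (t : ℕ) < k then k - 1 - (t : ℕ) else n + k - 1 - (t : ℕ))
    (σT σS σS' : Equiv.Perm (Fin n))
    (hσT : σT = (List.ofFn fun s => Equiv.swap (p s).1 (p s).2).prod)
    (hσS : σS = Equiv.swap i₁ j₁ * Equiv.swap i₂ j₂ * σT)
    (hσS' : σS' = Equiv.swap i₂ j₁ * Equiv.swap i₁ j₂ * σT) :
    bruhatLT (w * σS' * w) (w * σS * w) ↔ j₂ < j₁ := by
  have hfix : ∀ x, (∀ s, x ≠ (p s).1 ∧ x ≠ (p s).2) → σT x = x := fun x hx => by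
    subst hσT
    refine list_prod_apply_eq_self ?_
    simp only [List.mem_ofFn, forall_exists_index, forall_apply_eq_imp_iff]
    exact fun s => swap_apply_of_ne_of_ne (hx s).1 (hx s).2
  have hj₁n := j₁.isLt
  have hj₂n := j₂.isLt
  obtain ⟨hi, hij₁, hij₂⟩ : w i₂ < w i₁ ∧ w i₁ < w j₁ ∧ w i₁ < w j₂ := by
    simp only [Fin.lt_def, hw]
    split_ifs <;> omega
  subst hσS hσS'
  rw [bruhatLT_conj_two_arcs_iff (involutive_of_val_eq_reverse_blocks hw)
    (hfix i₁ fun s => ⟨(hnew s).1, (hnew s).2.1⟩)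
    (hfix i₂ fun s => ⟨(hnew s).2.2.1, (hnew s).2.2.2.1⟩)
    (hfix j₁ fun s => ⟨(hnew s).2.2.2.2.1, (hnew s).2.2.2.2.2.1⟩)
    (hfix j₂ fun s => ⟨(hnew s).2.2.2.2.2.2.1, (hnew s).2.2.2.2.2.2.2⟩) hi hij₁ hij₂ hjj]
  simp only [Fin.lt_def, hw]
  split_ifs <;> omega

/-- Fix `1 ≤ k < n` and let `ŵ ∈ Sₙ` be the longest element of
`S_k × S_{[k+1,n]}`.  Let `T` be a set of pairwise disjoint pairs with first
coordinate `≤ k` and second `> k`, and let `i₁ < i₂ ≤ k` and `j₁ ≠ j₂` with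
`j₁, j₂ > k` be four indices none of which is an endpoint of a pair of `T`.  Put
`S = {(i₁, j₁), (i₂, j₂)} ∪ T` and `S' = {(i₂, j₁), (i₁, j₂)} ∪ T`.  Then
`ŵ·σ_{S'}·ŵ < ŵ·σ_S·ŵ` in the Bruhat order iff `j₂ < j₁`. -/
theorem bruhat_swap_two_arcs (n k : ℕ) (hk1 : 1 ≤ k) (hkn : k < n) (m : ℕ)
    (p : Fin m → Fin n × Fin n)
    (hp : ∀ s, ((p s).1 : ℕ) < k ∧ k ≤ ((p s).2 : ℕ))
    (hdisj : ∀ s t : Fin m, s ≠ t →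
      (p s).1 ≠ (p t).1 ∧ (p s).1 ≠ (p t).2 ∧ (p s).2 ≠ (p t).1 ∧ (p s).2 ≠ (p t).2)
    (i₁ i₂ j₁ j₂ : Fin n) (hi₁₂ : i₁ < i₂) (hi₂ : (i₂ : ℕ) < k)
    (hj₁ : k ≤ (j₁ : ℕ)) (hj₂ : k ≤ (j₂ : ℕ)) (hjj : j₁ ≠ j₂)
    (hnew : ∀ s : Fin m,
      i₁ ≠ (p s).1 ∧ i₁ ≠ (p s).2 ∧ i₂ ≠ (p s).1 ∧ i₂ ≠ (p s).2 ∧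
        j₁ ≠ (p s).1 ∧ j₁ ≠ (p s).2 ∧ j₂ ≠ (p s).1 ∧ j₂ ≠ (p s).2)
    (w : Equiv.Perm (Fin n))
    (hw : ∀ t : Fin n,
      (w t : ℕ) = if (t : ℕ) < k then k - 1 - (t : ℕ) else n + k - 1 - (t : ℕ))
    (σT σS σS' : Equiv.Perm (Fin n))
    (hσT : σT = (List.ofFn fun s => Equiv.swap (p s).1 (p s).2).prod)
    (hσS : σS = Equiv.swap i₁ j₁ * Equiv.swap i₂ j₂ * σT)
    (hσS' : σS' = Equiv.swap i₂ j₁ * Equiv.swap i₁ j₂ * σT) :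
    bruhatLT (w * σS' * w) (w * σS * w) ↔ j₂ < j₁ :=
  bruhat_swap_two_arcs_general n k m p i₁ i₂ j₁ j₂ hi₁₂ hi₂ hj₁ hj₂ hjj hnew w hw σT σS σS' hσT hσS
    hσS'
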